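/- Conservativity of L^A over classical propositional logic: for every logic L^A (consisting of cl, j, j+ together with some subset of {j4, jd, jt}) and every purely propositional formula F ∈ L_cp (containing no justification terms), L^A ⊢ F if and only if CL ⊢ F, where CL is classical propositional logic. -/
import Mathlib


/-- Justification terms `Tm^A`: constants `c_i`, variables `x_i`, application
`·`, sum `+` and `!`. -/
inductive TmA : Type
  | const : ℕ → TmA
  | var : ℕ → TmA
  | app : TmA → TmA → TmA
  | plus : TmA → TmA → TmA
  | bang : TmA → TmA

/-- Formulas of `L_J^A`: atomic propositions, `⊥`, implication and `t:F`. -/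
inductive FmlA : Type
  | atom : ℕ → FmlA
  | bot : FmlA
  | imp : FmlA → FmlA → FmlA
  | just : TmA → FmlA → FmlA

namespace FmlA
/-- `¬A := A → ⊥`. -/
def neg (A : FmlA) : FmlA := A.imp .bot
/-- `A ∨ B := ¬A → B`. -/
def or' (A B : FmlA) : FmlA := A.neg.imp B
/-- `A ∧ B := ¬(A → ¬B)`. -/
def and' (A B : FmlA) : FmlA := (A.imp B.neg).neg
end FmlA

/-- Which of the optional axioms j4, jd, jt belong to the logic `L^A`. -/
structure FlagsA : Type where
  j4 : Bool
  jd : Bool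
  jt : Bool

/-- The axioms of the logic `L^A`: classical propositional axioms, j, j+,
together with the optional axioms j4, jd, jt as given by the flags. -/
inductive AAxiom (fl : FlagsA) : FmlA → Prop
  | cl1 (A B : FmlA) : AAxiom fl (A.imp (B.imp A))
  | cl2 (A B C : FmlA) :
      AAxiom fl ((A.imp (B.imp C)).imp ((A.imp B).imp (A.imp C)))
  | cl3 (A : FmlA) : AAxiom fl (A.neg.neg.imp A)
  | j (s t : TmA) (A B : FmlA) :
      AAxiom fl ((FmlA.just s (A.imp B)).imp
        ((FmlA.just t A).imp (FmlA.just (s.app t) B)))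
  | jplus (s t : TmA) (A : FmlA) :
      AAxiom fl (((FmlA.just s A).or' (FmlA.just t A)).imp
        (FmlA.just (s.plus t) A))
  | j4 (t : TmA) (A : FmlA) (h : fl.j4 = true) :
      AAxiom fl ((FmlA.just t A).imp (FmlA.just t.bang (FmlA.just t A)))
  | jd (t : TmA) (h : fl.jd = true) :
      AAxiom fl ((FmlA.just t FmlA.bot).imp FmlA.bot)
  | jt (t : TmA) (A : FmlA) (h : fl.jt = true) :
      AAxiom fl ((FmlA.just t A).imp A)

/-- `bangIterA n t = !…!t` with `n` occurrences of `!`. -/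
def bangIterA : ℕ → TmA → TmA
  | 0, t => t
  | n + 1, t => (bangIterA n t).bang

/-- `anFmlA c A n = !…!c : !…!c : … : !c : c : A` (with `n, n-1, …, 1, 0` bangs). -/
def anFmlA (c : TmA) (A : FmlA) : ℕ → FmlA
  | 0 => FmlA.just c A
  | n + 1 => FmlA.just (bangIterA (n + 1) c) (anFmlA c A n)

/-- A constant specification for `L^A`: a set of pairs `(c, A)` where `c` is a
constant and `A` an axiom of `L^A`. -/
def IsCSA (fl : FlagsA) (CS : Set (ℕ × FmlA)) : Prop :=
  ∀ p ∈ CS, AAxiom fl p.2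

/-- `CS` is axiomatically appropriate: every axiom has a constant justifying it. -/
def AxAppropriateA (fl : FlagsA) (CS : Set (ℕ × FmlA)) : Prop :=
  ∀ A : FmlA, AAxiom fl A → ∃ c : ℕ, (c, A) ∈ CS

/-- Hilbert-style derivability in `L^A_CS`: axioms of `L^A`, modus ponens, and
axiom necessitation. -/
inductive DerivA (fl : FlagsA) (CS : Set (ℕ × FmlA)) : FmlA → Prop
  | ax {A : FmlA} : AAxiom fl A → DerivA fl CS A
  | mp {A B : FmlA} : DerivA fl CS (A.imp B) → DerivA fl CS A → DerivA fl CS B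
  | an {c : ℕ} {A : FmlA} (n : ℕ) (h : (c, A) ∈ CS) :
      DerivA fl CS (anFmlA (TmA.const c) A n)

/-- An `L^A_CS`-subset model `(W, W0, V, E)`; `V ω F` encodes `V(ω,F) = 1`. -/
structure AModel (fl : FlagsA) (CS : Set (ℕ × FmlA)) (W : Type*) : Type _ where
  W0 : Set W
  V : W → FmlA → Prop
  E : W → TmA → Set W
  w0_nonempty : W0.Nonempty
  v_bot : ∀ ω ∈ W0, ¬ V ω FmlA.bot
  v_imp : ∀ ω ∈ W0, ∀ F G : FmlA, V ω (F.imp G) ↔ (¬ V ω F ∨ V ω G)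
  v_just : ∀ ω ∈ W0, ∀ (t : TmA) (F : FmlA),
      V ω (FmlA.just t F) ↔ E ω t ⊆ {υ | V υ F}
  e_plus : ∀ ω ∈ W0, ∀ s t : TmA, E ω (s.plus t) ⊆ E ω s ∩ E ω t
  e_app : ∀ ω ∈ W0, ∀ s t : TmA,
      E ω (s.app t) ⊆ {υ | ∀ F : FmlA,
        (∃ H : FmlA, E ω s ⊆ {x | V x (H.imp F)} ∧ E ω t ⊆ {x | V x H}) →
          V υ F}
  e_jd : fl.jd = true → ∀ ω ∈ W0, ∀ t : TmA, ∃ υ ∈ W0, υ ∈ E ω t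
  e_jt : fl.jt = true → ∀ ω ∈ W0, ∀ t : TmA, ω ∈ E ω t
  e_j4 : fl.j4 = true → ∀ ω ∈ W0, ∀ t : TmA,
      E ω t.bang ⊆ {υ | ∀ F : FmlA, V ω (FmlA.just t F) → V υ (FmlA.just t F)}
  e_cs : ∀ ω ∈ W0, ∀ (c : ℕ) (A : FmlA), (c, A) ∈ CS →
      E ω (TmA.const c) ⊆ {υ | V υ A}
  e_cs_bang : ∀ ω ∈ W0, ∀ (c : ℕ) (A : FmlA), (c, A) ∈ CS → ∀ n : ℕ,
      E ω (bangIterA (n + 1) (TmA.const c)) ⊆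
        {υ | V υ (anFmlA (TmA.const c) A n)}

/-- Purely propositional formulas `L_cp`: built only from atomic propositions,
`⊥` and `→`. -/
inductive PFml : Type
  | atom : ℕ → PFml
  | bot : PFml
  | imp : PFml → PFml → PFml

/-- `¬A := A → ⊥` for propositional formulas. -/
def PFml.neg (A : PFml) : PFml := A.imp .bot

/-- The inclusion of `L_cp` into `L_J^A`. -/
def PFml.toFmlA : PFml → FmlA
  | .atom n => .atom n
  | .bot => .bot
  | .imp A B => .imp A.toFmlA B.toFmlA

/-- A Hilbert system `CL` for classical propositional logic over `L_cp`,
with modus ponens. -/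
inductive DerivCL : PFml → Prop
  | cl1 (A B : PFml) : DerivCL (A.imp (B.imp A))
  | cl2 (A B C : PFml) :
      DerivCL ((A.imp (B.imp C)).imp ((A.imp B).imp (A.imp C)))
  | cl3 (A : PFml) : DerivCL (A.neg.neg.imp A)
  | mp {A B : PFml} : DerivCL (A.imp B) → DerivCL A → DerivCL B

/-- Projection of `L_J^A` onto `L_cp`, erasing justification operators. -/
def projP : FmlA → PFml
  | .atom n => .atom n
  | .bot => .bot
  | .imp A B => .imp (projP A) (projP B)
  | .just _ F => projP F

lemma projP_toFmlA (F : PFml) : projP F.toFmlA = F := by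
  induction F with
  | atom n => rfl
  | bot => rfl
  | imp A B ihA ihB => simp [PFml.toFmlA, projP, ihA, ihB]

lemma DerivCL.id' (A : PFml) : DerivCL (A.imp A) :=
  DerivCL.mp (DerivCL.mp (DerivCL.cl2 A (A.imp A) A) (DerivCL.cl1 A (A.imp A)))
    (DerivCL.cl1 A A)

lemma DerivCL.syl {A B C : PFml} (h1 : DerivCL (A.imp B))
    (h2 : DerivCL (B.imp C)) : DerivCL (A.imp C) :=
  DerivCL.mp (DerivCL.mp (DerivCL.cl2 A B C)
    (DerivCL.mp (DerivCL.cl1 (B.imp C) A) h2)) h1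

lemma DerivCL.peirce' (A : PFml) : DerivCL ((A.neg.imp A).imp A) := by
  have h1 : DerivCL ((A.neg.imp (A.imp .bot)).imp
      ((A.neg.imp A).imp (A.neg.imp .bot))) := DerivCL.cl2 A.neg A .bot
  have h2 : DerivCL ((A.neg.imp A).imp A.neg.neg) :=
    DerivCL.mp h1 (DerivCL.id' A.neg)
  exact DerivCL.syl h2 (DerivCL.cl3 A)

lemma projP_axiom {fl : FlagsA} {A : FmlA} (h : AAxiom fl A) :
    DerivCL (projP A) := by
  cases h with
  | cl1 A B => exact DerivCL.cl1 _ _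
  | cl2 A B C => exact DerivCL.cl2 _ _ _
  | cl3 A => exact DerivCL.cl3 _
  | j s t A B => exact DerivCL.id' _
  | jplus s t A => exact DerivCL.peirce' _
  | j4 t A h => exact DerivCL.id' _
  | jd t h => exact DerivCL.id' _
  | jt t A h => exact DerivCL.id' _

lemma projP_anFmlA (c : TmA) (A : FmlA) (n : ℕ) :
    projP (anFmlA c A n) = projP A := by
  induction n with
  | zero => rfl
  | succ n ih => simpa [anFmlA, projP] using ih

/-- **Conservativity of `L^A` over classical propositional logic**: for every
purely propositional formula `F`, `L^A ⊢ F` iff `CL ⊢ F`. -/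
theorem conservativityA (fl : FlagsA) (CS : Set (ℕ × FmlA)) (hCS : IsCSA fl CS)
    (F : PFml) : DerivA fl CS F.toFmlA ↔ DerivCL F := by
  constructor
  · intro h
    have key : ∀ {G : FmlA}, DerivA fl CS G → DerivCL (projP G) := by
      intro G hG
      induction hG with
      | ax hax => exact projP_axiom hax
      | mp h1 h2 ih1 ih2 => exact DerivCL.mp ih1 ih2
      | an n hc =>
        rw [projP_anFmlA]
        exact projP_axiom (hCS _ hc)
    have := key h
    rwa [projP_toFmlA] at this
  · intro h
    induction h with
    | cl1 A B => exact DerivA.ax (AAxiom.cl1 _ _)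
    | cl2 A B C => exact DerivA.ax (AAxiom.cl2 _ _ _)
    | cl3 A => exact DerivA.ax (AAxiom.cl3 _)
    | mp h1 h2 ih1 ih2 => exact DerivA.mp ih1 ih2
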